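/- arXiv:1401.4732 — 2 statements merged into one kernel-verified Lean document; each statement's English description precedes it below -/
import Mathlib

section
/- Fix integers ν ≥ 2, n ≥ 2, k ∈ ℤ, and m ≥ 1. Consider the sequence a + ρ = (ν+k+n, ν+k+n−1, ..., ν+k+1, ν−1, ν−2, ..., 1, ν+m) of length ν+n. Then either this sequence contains two equal entries, or the number of pairs (i, j) with i < j and (a+ρ)_i < (a+ρ)_j (strict order inversions for the decreasing order) is different from ν. -/
/-- the combinatorial heart of the Bott-vanishing computation.
For `ν ≥ 2`, `n ≥ 2`, `k ∈ ℤ`, `m ≥ 1`, the sequence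
`a + ρ = (ν+k+n, ν+k+n−1, ..., ν+k+1, ν−1, ν−2, ..., 1, ν+m)` of length `ν+n`
either contains two equal entries, or its number of strict order inversions
(pairs `i < j` with `(a+ρ)_i < (a+ρ)_j`) is different from `ν`. -/
theorem stmt_11 (ν n : ℕ) (k : ℤ) (m : ℕ)
    (hν : 2 ≤ ν) (hn : 2 ≤ n) (hm : 1 ≤ m)
    (c : Fin (ν + n) → ℤ)
    (hc : ∀ i : Fin (ν + n), c i =
      if (i : ℕ) < n then (ν : ℤ) + k + (n : ℤ) - (i : ℕ)
      else if (i : ℕ) < ν + n - 1 then (ν : ℤ) - 1 - (i : ℕ) + (n : ℤ)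
      else (ν : ℤ) + m) :
    (∃ i j : Fin (ν + n), i ≠ j ∧ c i = c j) ∨
      (Finset.univ.filter fun p : Fin (ν + n) × Fin (ν + n) =>
        p.1 < p.2 ∧ c p.1 < c p.2).card ≠ ν := by
  have hlt : ν + n - 1 < ν + n := by omega
  obtain ⟨last, hlastval⟩ : ∃ l : Fin (ν + n), (l : ℕ) = ν + n - 1 :=
    ⟨⟨ν + n - 1, hlt⟩, rfl⟩
  have hclast : c last = (ν : ℤ) + m := by
    rw [hc, hlastval, if_neg (by omega), if_neg (by omega)]
  by_cases hB : k + 2 ≤ (m : ℤ) ∧ (m : ℤ) ≤ k + n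
  · -- equality case: a first-block entry equals the last entry
    left
    obtain ⟨h1, h2⟩ := hB
    have he0 : (0:ℤ) ≤ (n : ℤ) + k - m := by omega
    have he2 : ((n : ℤ) + k - m).toNat ≤ n - 2 := by
      have := Int.toNat_of_nonneg he0; omega
    obtain ⟨i0, hi0⟩ : ∃ i : Fin (ν + n), (i : ℕ) = ((n : ℤ) + k - m).toNat :=
      ⟨⟨((n : ℤ) + k - m).toNat, by omega⟩, rfl⟩
    refine ⟨i0, last, ?_, ?_⟩
    · intro h
      have hv : (i0 : ℕ) = (last : ℕ) := by rw [h]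
      omega
    · rw [hc, hclast, hi0, if_pos (by omega)]
      have ht : (((((n : ℤ) + k - m).toNat) : ℤ)) = (n : ℤ) + k - m :=
        Int.toNat_of_nonneg he0
      rw [ht]
      ring
  · right
    push_neg at hB
    by_cases hC : k + (n:ℤ) < m
    · -- many inversions: every non-last index beats the last one
      intro hcard
      have hmem : ∀ x ∈ Finset.range (ν + n - 1),
          ((⟨x % (ν+n), Nat.mod_lt _ (by omega)⟩ : Fin (ν+n)), last) ∈
          (Finset.univ.filter fun p : Fin (ν + n) × Fin (ν + n) =>
            p.1 < p.2 ∧ c p.1 < c p.2) := by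
        intro x hx
        rw [Finset.mem_range] at hx
        have hxm : x % (ν+n) = x := Nat.mod_eq_of_lt (by omega)
        rw [Finset.mem_filter]
        refine ⟨Finset.mem_univ _, ?_, ?_⟩
        · rw [Fin.lt_def]
          show x % (ν + n) < (last : ℕ)
          omega
        · refine lt_of_lt_of_eq ?_ hclast.symm
          rw [hc]
          show (if x % (ν+n) < n then (ν : ℤ) + k + (n : ℤ) - (x % (ν+n) : ℕ)
            else if x % (ν+n) < ν + n - 1 then (ν : ℤ) - 1 - (x % (ν+n) : ℕ) + (n : ℤ)
            else (ν : ℤ) + m) < (ν : ℤ) + m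
          split_ifs <;> omega
      have hinj : Set.InjOn (fun x : ℕ =>
          ((⟨x % (ν+n), Nat.mod_lt _ (by omega)⟩ : Fin (ν+n)), last))
          (Finset.range (ν + n - 1)) := by
        intro a ha b hb hab
        simp only [Finset.coe_range, Set.mem_Iio] at ha hb
        have := congrArg (fun p : Fin (ν+n) × Fin (ν+n) => (p.1 : ℕ)) hab
        simp only at this
        rwa [Nat.mod_eq_of_lt (by omega), Nat.mod_eq_of_lt (by omega)] at this
      have hle := Finset.card_le_card_of_injOn _ hmem hinj
      rw [Finset.card_range, hcard] at hle
      omega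
    · -- m ≤ k + 1 : exactly ν - 1 inversions
      have hk : (0:ℤ) ≤ k := by omega
      have hmk : (m : ℤ) ≤ k + 1 := by
        by_contra h
        exact absurd (hB (by omega)) hC
      have key : ∀ p : Fin (ν+n) × Fin (ν+n),
          (p.1 < p.2 ∧ c p.1 < c p.2) ↔
          (n ≤ (p.1 : ℕ) ∧ (p.1 : ℕ) < ν + n - 1 ∧ (p.2 : ℕ) = ν + n - 1) := by
        intro p
        rw [hc p.1, hc p.2, Fin.lt_def]
        have hp1 := p.1.isLt
        have hp2 := p.2.isLt
        constructor
        · rintro ⟨h1, h2⟩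
          split_ifs at h2 <;> omega
        · rintro ⟨g1, g2, g3⟩
          refine ⟨by omega, ?_⟩
          rw [if_neg (by omega), if_pos g2, if_neg (by omega), if_neg (by omega)]
          omega
      intro hcard
      have hcard' : (Finset.univ.filter fun p : Fin (ν + n) × Fin (ν + n) =>
            p.1 < p.2 ∧ c p.1 < c p.2).card = (Finset.Ico n (ν + n - 1)).card := by
        apply Finset.card_bij (fun p _ => ((p.1 : ℕ)))
        · intro p hp
          rw [Finset.mem_filter, key p] at hp
          rw [Finset.mem_Ico]
          exact ⟨hp.2.1, hp.2.2.1⟩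
        · intro p hp q hq hpq
          rw [Finset.mem_filter, key p] at hp
          rw [Finset.mem_filter, key q] at hq
          have e1 : p.1 = q.1 := Fin.ext hpq
          have e2 : p.2 = q.2 := Fin.ext (by omega)
          exact Prod.ext e1 e2
        · intro b hb
          rw [Finset.mem_Ico] at hb
          refine ⟨((⟨b, by omega⟩ : Fin (ν+n)), last), ?_, rfl⟩
          rw [Finset.mem_filter]
          exact ⟨Finset.mem_univ _, (key _).2 ⟨hb.1, hb.2, hlastval⟩⟩
      rw [hcard, Nat.card_Ico] at hcard'
      omega
end

section
/- Let the sequence d_• = (0 = d_0 < d_1 < ... < d_t < d_{t+1}) satisfy d_{j+1} − d_{j-1} ≥ 3 for all j = 1, ..., t. Write any weight as α = (a_1 repeated d_1 times, a_2 repeated d_2−d_1 times, ..., a_t repeated d_{t+1}−d_t times) ∈ ℤ^{d_{t+1}} and ρ = (d_{t+1}−1, ..., 1, 0). Then for every choice of integers a_1, ..., a_t, the vector α + ρ either has two equal entries, or the number of strict inversions (pairs i < j with (α+ρ)_i < (α+ρ)_j) is different from 1. -/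
/-- combinatorial content of "partial flag varieties are 1-splitting".
Let `d_• = (0 = d_0 < d_1 < ... < d_{t+1})` satisfy `d_{j+1} − d_{j−1} ≥ 3` for
`j = 1, ..., t`.  For any integers constant on the blocks determined by `d_•`, the
vector `α + ρ` (where `ρ = (d_{t+1}−1, ..., 1, 0)`) either has two equal entries, or
its number of strict inversions (pairs `i < j` with `(α+ρ)_i < (α+ρ)_j`) is `≠ 1`. -/
theorem stmt_15 (t : ℕ) (d : Fin (t + 2) → ℕ) (hmono : StrictMono d) (h0 : d 0 = 0)
    (h3 : ∀ j : Fin t, d j.castSucc.castSucc + 3 ≤ d j.succ.succ)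
    (b : Fin (t + 1) → ℤ)
    (c : Fin (d (Fin.last (t + 1))) → ℤ)
    (hc : ∀ (j : Fin (t + 1)) (i : Fin (d (Fin.last (t + 1)))),
      d j.castSucc ≤ (i : ℕ) → (i : ℕ) < d j.succ →
      c i = b j + ((d (Fin.last (t + 1)) : ℤ) - 1 - (i : ℕ))) :
    (∃ i₁ i₂ : Fin (d (Fin.last (t + 1))), i₁ ≠ i₂ ∧ c i₁ = c i₂) ∨
      (Finset.univ.filter fun p : Fin (d (Fin.last (t + 1))) × Fin (d (Fin.last (t + 1))) =>
        p.1 < p.2 ∧ c p.1 < c p.2).card ≠ 1 := by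
  classical
  by_cases hinj : ∃ i₁ i₂ : Fin (d (Fin.last (t + 1))), i₁ ≠ i₂ ∧ c i₁ = c i₂
  · exact Or.inl hinj
  push_neg at hinj
  right
  intro hcard
  obtain ⟨p, hp⟩ := Finset.card_eq_one.mp hcard
  obtain ⟨i, i'⟩ := p
  have hpmem : (i, i') ∈ (Finset.univ.filter fun p : Fin (d (Fin.last (t + 1))) ×
      Fin (d (Fin.last (t + 1))) => p.1 < p.2 ∧ c p.1 < c p.2) := by
    rw [hp]; exact Finset.mem_singleton_self _
  rw [Finset.mem_filter] at hpmem
  obtain ⟨-, hlt, hclt⟩ := hpmem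
  replace hlt : i < i' := hlt
  replace hclt : c i < c i' := hclt
  have huniq : ∀ q : Fin (d (Fin.last (t + 1))) × Fin (d (Fin.last (t + 1))),
      q.1 < q.2 → c q.1 < c q.2 → q = (i, i') := by
    intro q h1 h2
    have hq : q ∈ (Finset.univ.filter fun p : Fin (d (Fin.last (t + 1))) ×
        Fin (d (Fin.last (t + 1))) => p.1 < p.2 ∧ c p.1 < c p.2) :=
      Finset.mem_filter.mpr ⟨Finset.mem_univ q, h1, h2⟩
    rw [hp] at hq; exact Finset.mem_singleton.mp hq
  -- every index lies in a block
  have hblock : ∀ k : Fin (d (Fin.last (t + 1))),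
      ∃ j : Fin (t + 1), d j.castSucc ≤ (k : ℕ) ∧ (k : ℕ) < d j.succ := by
    intro k
    have hP0 : ∃ h : 0 < t + 2, d ⟨0, h⟩ ≤ (k : ℕ) :=
      ⟨by omega, by simp [show (⟨0, by omega⟩ : Fin (t + 2)) = 0 from rfl, h0]⟩
    set P : ℕ → Prop := fun m => ∃ h : m < t + 2, d ⟨m, h⟩ ≤ (k : ℕ) with hPdef
    have hspec : P (Nat.findGreatest P (t + 1)) := Nat.findGreatest_spec (Nat.zero_le _) hP0
    set j₀ := Nat.findGreatest P (t + 1) with hj₀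
    obtain ⟨hj₀lt, hdle⟩ := hspec
    have hkn : (k : ℕ) < d (Fin.last (t + 1)) := k.isLt
    have hj₀ne : j₀ ≠ t + 1 := by
      intro h
      have he : (⟨j₀, hj₀lt⟩ : Fin (t + 2)) = Fin.last (t + 1) := by
        apply Fin.ext; simp [h]
      rw [he] at hdle
      omega
    have hj₀le : j₀ ≤ t + 1 := Nat.findGreatest_le _
    have hj₀lt' : j₀ < t + 1 := lt_of_le_of_ne hj₀le hj₀ne
    have hnext : ¬ P (j₀ + 1) := Nat.findGreatest_is_greatest (Nat.lt_succ_self _) (by omega)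
    refine ⟨⟨j₀, hj₀lt'⟩, ?_, ?_⟩
    · have he : (Fin.castSucc (⟨j₀, hj₀lt'⟩ : Fin (t + 1))) = ⟨j₀, hj₀lt⟩ := by
        apply Fin.ext; rfl
      rw [he]; exact hdle
    · have he : (Fin.succ (⟨j₀, hj₀lt'⟩ : Fin (t + 1))) = ⟨j₀ + 1, by omega⟩ := by
        apply Fin.ext; rfl
      rw [he]
      by_contra hcon
      exact hnext ⟨by omega, by omega⟩
  -- step A: i' = i + 1
  have hA : (i' : ℕ) = (i : ℕ) + 1 := by
    by_contra h
    have h1 : (i : ℕ) + 1 < (i' : ℕ) := by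
      have h2 := hlt
      rw [Fin.lt_def] at h2
      omega
    have hmlt : (i : ℕ) + 1 < d (Fin.last (t + 1)) := lt_trans h1 i'.isLt
    rcases lt_trichotomy (c i) (c ⟨(i : ℕ) + 1, hmlt⟩) with hcm | hcm | hcm
    · have he := huniq (i, ⟨(i : ℕ) + 1, hmlt⟩) (by rw [Fin.lt_def]; simp) hcm
      have he2 : (i : ℕ) + 1 = (i' : ℕ) :=
        congrArg (fun q : Fin (d (Fin.last (t + 1))) × Fin (d (Fin.last (t + 1))) => (q.2 : ℕ)) he
      omega
    · have hne : i ≠ ⟨(i : ℕ) + 1, hmlt⟩ := by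
        intro h'; have := congrArg Fin.val h'; simp at this
      exact hinj i _ hne hcm
    · have he := huniq (⟨(i : ℕ) + 1, hmlt⟩, i') (by rw [Fin.lt_def]; exact h1)
        (lt_trans hcm hclt)
      have he2 : (i : ℕ) + 1 = (i : ℕ) :=
        congrArg (fun q : Fin (d (Fin.last (t + 1))) × Fin (d (Fin.last (t + 1))) => (q.1 : ℕ)) he
      omega
  -- blocks of i and i'
  obtain ⟨j, hj1, hj2⟩ := hblock i
  obtain ⟨j', hj'1, hj'2⟩ := hblock i'
  have hci : c i = b j + ((d (Fin.last (t + 1)) : ℤ) - 1 - (i : ℕ)) := hc j i hj1 hj2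
  have hci' : c i' = b j' + ((d (Fin.last (t + 1)) : ℤ) - 1 - (i' : ℕ)) := hc j' i' hj'1 hj'2
  -- i and i' are in different blocks
  have hdiff : j ≠ j' := by
    intro h
    subst h
    rw [hci, hci', hA] at hclt
    push_cast at hclt
    omega
  -- in fact j' = j + 1 and the boundary is at i + 1
  have h1 : (j : ℕ) < (j' : ℕ) := by
    by_contra h
    push_neg at h
    have hlt' : (j' : ℕ) < (j : ℕ) := by
      rcases lt_or_eq_of_le h with h' | h'
      · exact h'
      · exact absurd (Fin.ext h'.symm) hdiff
    have hle : j'.succ ≤ j.castSucc := by rw [Fin.le_def]; simp; omega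
    have := hmono.monotone hle
    omega
  have h2' : d j.succ ≤ d j'.castSucc :=
    hmono.monotone (show j.succ ≤ j'.castSucc by rw [Fin.le_def]; simp; omega)
  have hjj : (j' : ℕ) = (j : ℕ) + 1 := by
    by_contra h
    have hlt2 : j.succ < j'.castSucc := by rw [Fin.lt_def]; simp; omega
    have := hmono hlt2
    omega
  have hbdry : d j.succ = (i : ℕ) + 1 := by omega
  have hbdry2 : d j'.castSucc = (i : ℕ) + 1 := by omega
  have hb2 : b j + 2 ≤ b j' := by
    rw [hci, hci', hA] at hclt
    push_cast at hclt
    omega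
  -- apply the gap hypothesis
  have hjt : (j : ℕ) < t := by
    have := j'.isLt
    omega
  have h3' := h3 ⟨(j : ℕ), hjt⟩
  have hcast1 : ((⟨(j : ℕ), hjt⟩ : Fin t).castSucc.castSucc) = j.castSucc := by
    apply Fin.ext; rfl
  have hcast2 : ((⟨(j : ℕ), hjt⟩ : Fin t).succ.succ : Fin (t + 2)) = j'.succ := by
    apply Fin.ext; simp [hjj]
  rw [hcast1, hcast2] at h3'
  rcases le_or_gt (d j.castSucc + 2) (d j.succ) with hbig | hsmall
  · -- block j has size ≥ 2: use i - 1
    have hi1 : 1 ≤ (i : ℕ) := by omega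
    have hmn : (i : ℕ) - 1 < d (Fin.last (t + 1)) := by omega
    have hcm : c ⟨(i : ℕ) - 1, hmn⟩ = b j + ((d (Fin.last (t + 1)) : ℤ) - 1 - ((i : ℕ) - 1)) := by
      have := hc j ⟨(i : ℕ) - 1, hmn⟩ (by simp; omega) (by simp; omega)
      rw [this]
      congr 1
      simp
      omega
    rcases eq_or_lt_of_le hb2 with heq | hgt
    · have hee : c ⟨(i : ℕ) - 1, hmn⟩ = c i' := by
        rw [hcm, hci', hA, ← heq]
        push_cast
        omega
      have hne : (⟨(i : ℕ) - 1, hmn⟩ : Fin _) ≠ i' := by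
        intro h'; have := congrArg Fin.val h'; simp at this; omega
      exact hinj _ i' hne hee
    · have hinvm : c ⟨(i : ℕ) - 1, hmn⟩ < c i' := by
        rw [hcm, hci', hA]
        push_cast
        omega
      have he := huniq (⟨(i : ℕ) - 1, hmn⟩, i') (by rw [Fin.lt_def]; simp; omega) hinvm
      have he2 : (i : ℕ) - 1 = (i : ℕ) :=
        congrArg (fun q : Fin (d (Fin.last (t + 1))) × Fin (d (Fin.last (t + 1))) => (q.1 : ℕ)) he
      omega
  · -- block j' has size ≥ 2: use i + 2
    have hsz : (i : ℕ) + 3 ≤ d j'.succ := by omega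
    have hi2n : (i : ℕ) + 2 < d (Fin.last (t + 1)) := by
      have := hmono.monotone (show j'.succ ≤ Fin.last (t + 1) from Fin.le_last _)
      omega
    have hcm : c ⟨(i : ℕ) + 2, hi2n⟩ =
        b j' + ((d (Fin.last (t + 1)) : ℤ) - 1 - ((i : ℕ) + 2)) := by
      have := hc j' ⟨(i : ℕ) + 2, hi2n⟩ (by simp; omega) (by simp; omega)
      rw [this]
      push_cast
      ring
    rcases eq_or_lt_of_le hb2 with heq | hgt
    · have hee : c i = c ⟨(i : ℕ) + 2, hi2n⟩ := by
        rw [hci, hcm, ← heq]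
        ring
      have hne : i ≠ (⟨(i : ℕ) + 2, hi2n⟩ : Fin _) := by
        intro h'; have := congrArg Fin.val h'; simp at this
      exact hinj i _ hne hee
    · have hinvm : c i < c ⟨(i : ℕ) + 2, hi2n⟩ := by
        rw [hci, hcm]
        omega
      have he := huniq (i, ⟨(i : ℕ) + 2, hi2n⟩) (by rw [Fin.lt_def]; simp) hinvm
      have he2 : (i : ℕ) + 2 = (i' : ℕ) :=
        congrArg (fun q : Fin (d (Fin.last (t + 1))) × Fin (d (Fin.last (t + 1))) => (q.2 : ℕ)) he
      omega
end
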